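/- (Forward direction of Theorem 2 of the paper.) Under Assumption 1, if b ∈ B*_n then for every v ∈ ℝ^K: E[n^{-1} Σ_{i=1}^n (2Y_i − 1)·1{X_i b ≥ 0}·1{X_i v < 0}] ≥ 0 and E[n^{-1} Σ_{i=1}^n (1 − 2Y_i)·1{X_i b ≤ 0}·1{X_i v > 0}] ≥ 0. -/

import Mathlib

open MeasureTheory ProbabilityTheory

/-- Membership in the finite sample identified set `B*_n`. -/
def memFSID {Ω : Type*} [MeasurableSpace Ω] (P : Measure Ω) {n K : ℕ}
    (X : Fin n → Fin K → ℝ) (Y : Fin n → Ω → ℝ) (b : Fin K → ℝ) : Prop :=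
  ∃ Yt Ut : Fin n → Ω → ℝ,
    (∀ i, Measurable (Yt i)) ∧ (∀ i, Measurable (Ut i)) ∧
    (∀ i, ∀ᵐ ω ∂P, Yt i ω = if 0 ≤ (∑ j, X i j * b j) + Ut i ω then 1 else 0) ∧
    Measure.map (fun ω => fun i => Yt i ω) P =
      Measure.map (fun ω => fun i => Y i ω) P ∧
    (∀ i, P {ω | 0 ≤ Ut i ω} = 1/2) ∧
    iIndepFun
      (fun i ω => if 0 ≤ Ut i ω then (1 : ℝ) else 0) P

/-!
Only the first moments of the observed outcomes enter the two inequalities, and these are the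
same for `Y` and for the outcomes `Ỹ` of any model `(b, Ũ)` in the definition of `B*_n`.
In that model `E Ỹᵢ = ℙ(Ũᵢ ≥ -Xᵢ b)`, which is at least `1/2` when `Xᵢ b ≥ 0` and at most
`1/2` when `Xᵢ b ≤ 0` because `Ũᵢ` has median zero. Hence every summand of either moment has
nonnegative expectation.
-/

lemma ite_nonneg_add_eq_indicator {α : Type*} {U : α → ℝ} {c : ℝ} :
    (fun x => if 0 ≤ c + U x then (1 : ℝ) else 0) = {x | 0 ≤ c + U x}.indicator 1 := by
  ext x
  simp [Set.indicator_apply]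

section BinaryResponse

variable {Ω : Type*} [MeasurableSpace Ω] {P : Measure Ω} {U Y : Ω → ℝ} {c : ℝ}

lemma measureReal_nonneg_eq_half (hmed : P {ω | 0 ≤ U ω} = 1/2) :
    P.real {ω | 0 ≤ U ω} = 1/2 := by
  simp [measureReal_def, hmed]

lemma half_le_measureReal_nonneg_add [IsFiniteMeasure P] (hmed : P {ω | 0 ≤ U ω} = 1/2)
    (hc : 0 ≤ c) : 1/2 ≤ P.real {ω | 0 ≤ c + U ω} :=
  measureReal_nonneg_eq_half hmed ▸ measureReal_mono fun ω (hω : 0 ≤ U ω) => add_nonneg hc hω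

lemma measureReal_nonneg_add_le_half [IsFiniteMeasure P] (hmed : P {ω | 0 ≤ U ω} = 1/2)
    (hc : c ≤ 0) : P.real {ω | 0 ≤ c + U ω} ≤ 1/2 :=
  measureReal_nonneg_eq_half hmed ▸
    measureReal_mono fun ω (hω : 0 ≤ c + U ω) => show 0 ≤ U ω by linarith

variable (hU : Measurable U) (hY : Y =ᵐ[P] fun ω => if 0 ≤ c + U ω then 1 else 0)
include hU hY

lemma integrable_of_ae_eq_ite_nonneg_add [IsFiniteMeasure P] : Integrable Y P := by
  refine Integrable.congr ?_ hY.symm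
  rw [ite_nonneg_add_eq_indicator]
  exact (integrable_const 1).indicator (measurableSet_le measurable_const (hU.const_add c))

lemma integral_eq_measureReal_of_ae_eq_ite :
    ∫ ω, Y ω ∂P = P.real {ω | 0 ≤ c + U ω} := by
  rw [integral_congr_ae hY, ite_nonneg_add_eq_indicator,
    integral_indicator_one (measurableSet_le measurable_const (hU.const_add c))]

variable [IsProbabilityMeasure P]

lemma integral_two_mul_sub_one_eq :
    ∫ ω, (2 * Y ω - 1) ∂P = 2 * P.real {ω | 0 ≤ c + U ω} - 1 := by
  rw [integral_sub ((integrable_of_ae_eq_ite_nonneg_add hU hY).const_mul 2) (integrable_const 1),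
    integral_const_mul, integral_eq_measureReal_of_ae_eq_ite hU hY]
  simp

lemma integral_two_mul_sub_one_mul_ite_nonneg (hmed : P {ω | 0 ≤ U ω} = 1/2) :
    0 ≤ (∫ ω, (2 * Y ω - 1) ∂P) * (if 0 ≤ c then 1 else 0) := by
  split_ifs with hc
  · linarith [integral_two_mul_sub_one_eq hU hY, half_le_measureReal_nonneg_add hmed hc]
  · rw [mul_zero]

lemma integral_one_sub_two_mul_mul_ite_nonneg (hmed : P {ω | 0 ≤ U ω} = 1/2) :
    0 ≤ (∫ ω, (1 - 2 * Y ω) ∂P) * (if c ≤ 0 then 1 else 0) := by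
  have hneg : ∫ ω, (1 - 2 * Y ω) ∂P = -∫ ω, (2 * Y ω - 1) ∂P := by
    rw [← integral_neg]
    simp
  split_ifs with hc
  · linarith [integral_two_mul_sub_one_eq hU hY, measureReal_nonneg_add_le_half hmed hc]
  · rw [mul_zero]

end BinaryResponse

lemma integral_inv_mul_sum_nonneg {Ω : Type*} [MeasurableSpace Ω] {P : Measure Ω} {n : ℕ}
    {Z : Fin n → Ω → ℝ} (hZ : ∀ i, Integrable (Z i) P) (h : ∀ i, 0 ≤ ∫ ω, Z i ω ∂P) :
    0 ≤ ∫ ω, (n : ℝ)⁻¹ * ∑ i, Z i ω ∂P := by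
  rw [integral_const_mul, integral_finsetSum _ fun i _ => hZ i]
  exact mul_nonneg (by positivity) (Finset.sum_nonneg fun i _ => h i)

lemma identDistrib_of_map_eq {Ω α : Type*} [MeasurableSpace Ω] [MeasurableSpace α]
    {P : Measure Ω} [IsProbabilityMeasure P] {f g : Ω → α} (hg : Measurable g)
    (h : P.map f = P.map g) : IdentDistrib f g P P where
  aemeasurable_fst :=
    .of_map_ne_zero (h ▸ (Measure.isProbabilityMeasure_map hg.aemeasurable).ne_zero)
  aemeasurable_snd := hg.aemeasurable
  map_eq := h

section MomentInequalities

variable {Ω : Type*} [MeasurableSpace Ω] {P : Measure Ω} [IsProbabilityMeasure P] {n : ℕ}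
  {Y Yt Ut : Fin n → Ω → ℝ} {c a : Fin n → ℝ}
  (hid : IdentDistrib (fun ω i => Y i ω) (fun ω i => Yt i ω) P P)
  (hUt : ∀ i, Measurable (Ut i)) (hmed : ∀ i, P {ω | 0 ≤ Ut i ω} = 1/2)
  (hYt : ∀ i, Yt i =ᵐ[P] fun ω => if 0 ≤ c i + Ut i ω then 1 else 0) (ha : ∀ i, 0 ≤ a i)
include hid hUt hmed hYt ha

lemma integral_mean_two_mul_sub_one_mul_ite_nonneg :
    0 ≤ ∫ ω, (n : ℝ)⁻¹ * ∑ i, (2 * Y i ω - 1) * (if 0 ≤ c i then 1 else 0) * a i ∂P := by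
  have hmeas : Measurable fun y : Fin n → ℝ =>
      (n : ℝ)⁻¹ * ∑ i, (2 * y i - 1) * (if 0 ≤ c i then 1 else 0) * a i := by
    fun_prop
  refine le_of_le_of_eq ?_ (hid.comp hmeas).integral_eq.symm
  have hYtint i := integrable_of_ae_eq_ite_nonneg_add (hUt i) (hYt i)
  refine integral_inv_mul_sum_nonneg
    (fun i => (((hYtint i).const_mul 2).sub (integrable_const 1)).mul_const _ |>.mul_const _)
    fun i => ?_
  rw [integral_mul_const, integral_mul_const]
  exact mul_nonneg (integral_two_mul_sub_one_mul_ite_nonneg (hUt i) (hYt i) (hmed i)) (ha i)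

lemma integral_mean_one_sub_two_mul_mul_ite_nonneg :
    0 ≤ ∫ ω, (n : ℝ)⁻¹ * ∑ i, (1 - 2 * Y i ω) * (if c i ≤ 0 then 1 else 0) * a i ∂P := by
  have hmeas : Measurable fun y : Fin n → ℝ =>
      (n : ℝ)⁻¹ * ∑ i, (1 - 2 * y i) * (if c i ≤ 0 then 1 else 0) * a i := by
    fun_prop
  refine le_of_le_of_eq ?_ (hid.comp hmeas).integral_eq.symm
  have hYtint i := integrable_of_ae_eq_ite_nonneg_add (hUt i) (hYt i)
  refine integral_inv_mul_sum_nonneg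
    (fun i => ((integrable_const 1).sub ((hYtint i).const_mul 2)).mul_const _ |>.mul_const _)
    fun i => ?_
  rw [integral_mul_const, integral_mul_const]
  exact mul_nonneg (integral_one_sub_two_mul_mul_ite_nonneg (hUt i) (hYt i) (hmed i)) (ha i)

end MomentInequalities

theorem theorem2_forward
    {Ω : Type*} [MeasurableSpace Ω] (P : Measure Ω) [IsProbabilityMeasure P]
    {n K : ℕ}
    (X : Fin n → Fin K → ℝ)
    (Y : Fin n → Ω → ℝ)
    (b : Fin K → ℝ) (hb : memFSID P X Y b) :
    ∀ v : Fin K → ℝ,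
      0 ≤ (∫ ω, (n : ℝ)⁻¹ * ∑ i, (2 * Y i ω - 1) *
            (if 0 ≤ (∑ j, X i j * b j) then 1 else 0) *
            (if (∑ j, X i j * v j) < 0 then 1 else 0) ∂P) ∧
      0 ≤ (∫ ω, (n : ℝ)⁻¹ * ∑ i, (1 - 2 * Y i ω) *
            (if (∑ j, X i j * b j) ≤ 0 then 1 else 0) *
            (if 0 < (∑ j, X i j * v j) then 1 else 0) ∂P) := by
  intro v
  obtain ⟨Yt, Ut, hYtm, hUtm, hYtU, hmap, hUtmed, -⟩ := hb
  have hid : IdentDistrib (fun ω i => Y i ω) (fun ω i => Yt i ω) P P :=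
    identDistrib_of_map_eq (measurable_pi_lambda _ hYtm) hmap.symm
  exact ⟨integral_mean_two_mul_sub_one_mul_ite_nonneg hid hUtm hUtmed hYtU fun i => by positivity,
    integral_mean_one_sub_two_mul_mul_ite_nonneg hid hUtm hUtmed hYtU fun i => by positivity⟩
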